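/- Let P_n = ∏_i Be(p_{n,i}) and P_n' = ∏_i Be(p_{n,i}') be product Bernoulli measures on {0,1}^{N(n)} with 0 < p_{n,i}' < 1 for all i, and suppose there is a constant C₂ with p_{n,i} ≤ C₂ p_{n,i}' and 1 − p_{n,i} ≤ C₂(1 − p_{n,i}') for all n, i, and Σ_i ρ(p_{n,i}, p_{n,i}') ≤ C₁ for all n. Then the χ²-type integral ∫ (dP_n/dP_n')² dP_n' is bounded uniformly in n, and consequently P_n(A_n) = O(√(P_n'(A_n))) for any sequence of measurable sets A_n; in particular P_n'(A_n) → 0 implies P_n(A_n) → 0 (contiguity). -/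
import Mathlib


open Filter

noncomputable def rho (p q : ℝ) : ℝ :=
  (Real.sqrt p - Real.sqrt q) ^ 2 + (Real.sqrt (1 - p) - Real.sqrt (1 - q)) ^ 2

noncomputable def bmass (p : ℝ) (b : Bool) : ℝ := if b then p else 1 - p

lemma rho_nonneg (p q : ℝ) : 0 ≤ rho p q := add_nonneg (sq_nonneg _) (sq_nonneg _)

lemma sub_bound (a b D : ℝ) (ha : 0 ≤ a) (hb : 0 < b) (hD : a ≤ D * b) :
    (a - b) ^ 2 / b ≤ 2 * (D + 1) * (Real.sqrt a - Real.sqrt b) ^ 2 := by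
  rw [div_le_iff₀ hb]
  have sa : Real.sqrt a ^ 2 = a := Real.sq_sqrt ha
  have sb : Real.sqrt b ^ 2 = b := Real.sq_sqrt hb.le
  have h1 : (Real.sqrt a + Real.sqrt b) ^ 2 ≤ 2 * (D + 1) * b := by
    nlinarith [sq_nonneg (Real.sqrt a - Real.sqrt b)]
  have h2 : a - b = (Real.sqrt a - Real.sqrt b) * (Real.sqrt a + Real.sqrt b) := by
    have h' : (Real.sqrt a - Real.sqrt b) * (Real.sqrt a + Real.sqrt b)
        = Real.sqrt a ^ 2 - Real.sqrt b ^ 2 := by ring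
    rw [h', sa, sb]
  calc (a - b) ^ 2 = (Real.sqrt a - Real.sqrt b) ^ 2 * (Real.sqrt a + Real.sqrt b) ^ 2 := by
        rw [h2, mul_pow]
    _ ≤ (Real.sqrt a - Real.sqrt b) ^ 2 * (2 * (D + 1) * b) :=
        mul_le_mul_of_nonneg_left h1 (sq_nonneg _)
    _ = 2 * (D + 1) * (Real.sqrt a - Real.sqrt b) ^ 2 * b := by ring

lemma coord_bound (p q D : ℝ) (hq0 : 0 < q) (hq1 : q < 1) (hp0 : 0 ≤ p) (hp1 : p ≤ 1)
    (h1 : p ≤ D * q) (h2 : 1 - p ≤ D * (1 - q)) :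
    p ^ 2 / q + (1 - p) ^ 2 / (1 - q) ≤ 1 + 2 * (D + 1) * rho p q := by
  have hq1' : 0 < 1 - q := by linarith
  have key : p ^ 2 / q + (1 - p) ^ 2 / (1 - q)
      = 1 + (p - q) ^ 2 / q + (p - q) ^ 2 / (1 - q) := by
    field_simp
    ring
  have b1 := sub_bound p q D hp0 hq0 h1
  have b2 := sub_bound (1 - p) (1 - q) D (by linarith) hq1' h2
  have e : ((1 - p) - (1 - q)) ^ 2 = (p - q) ^ 2 := by ring
  rw [e] at b2
  rw [key, rho]
  linarith

lemma chi_formula (m : ℕ) (P Q : Fin m → ℝ) :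
    (∑ x : Fin m → Bool, (∏ i, bmass (P i) (x i)) ^ 2 / ∏ i, bmass (Q i) (x i))
      = ∏ i, (P i ^ 2 / Q i + (1 - P i) ^ 2 / (1 - Q i)) := by
  have e : ∀ x : Fin m → Bool,
      (∏ i, bmass (P i) (x i)) ^ 2 / ∏ i, bmass (Q i) (x i)
        = ∏ i, (bmass (P i) (x i)) ^ 2 / bmass (Q i) (x i) := by
    intro x
    rw [Finset.prod_div_distrib, Finset.prod_pow]
  simp_rw [e]
  rw [← Fintype.piFinset_univ]
  refine ((Finset.prod_univ_sum (fun _ : Fin m => (Finset.univ : Finset Bool))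
      fun i b => bmass (P i) b ^ 2 / bmass (Q i) b).symm.trans
      (Finset.prod_congr rfl fun i _ => ?_))
  simp [bmass, Fintype.sum_bool]

theorem stmt14 (N : ℕ → ℕ)
    (p p' : ∀ n, Fin (N n) → ℝ)
    (hp : ∀ n i, p n i ∈ Set.Icc (0:ℝ) 1)
    (hp' : ∀ n i, 0 < p' n i ∧ p' n i < 1)
    (C₁ C₂ : ℝ)
    (hC₂ : ∀ n i, p n i ≤ C₂ * p' n i ∧ 1 - p n i ≤ C₂ * (1 - p' n i))
    (hC₁ : ∀ n, ∑ i, rho (p n i) (p' n i) ≤ C₁) :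
    (∃ C : ℝ, 0 < C ∧ ∀ n,
        (∑ x : Fin (N n) → Bool,
            (∏ i, bmass (p n i) (x i)) ^ 2 / ∏ i, bmass (p' n i) (x i)) ≤ C ∧
        ∀ A : Finset (Fin (N n) → Bool),
          ∑ x ∈ A, ∏ i, bmass (p n i) (x i) ≤
            C * Real.sqrt (∑ x ∈ A, ∏ i, bmass (p' n i) (x i))) ∧
    ∀ A : ∀ n, Finset (Fin (N n) → Bool),
      Tendsto (fun n => ∑ x ∈ A n, ∏ i, bmass (p' n i) (x i)) atTop (nhds 0) →
      Tendsto (fun n => ∑ x ∈ A n, ∏ i, bmass (p n i) (x i)) atTop (nhds 0) := by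
  have hK0 : (0:ℝ) ≤ 2 * (|C₂| + 1) := by positivity
  set C : ℝ := max (Real.exp (2 * (|C₂| + 1) * C₁)) 1 with hCdef
  have hC1 : (1:ℝ) ≤ C := le_max_right _ _
  have hC0 : (0:ℝ) < C := lt_of_lt_of_le one_pos hC1
  -- nonnegativity / positivity of masses
  have hf0 : ∀ n (x : Fin (N n) → Bool), 0 ≤ ∏ i, bmass (p n i) (x i) := by
    intro n x
    refine Finset.prod_nonneg fun i _ => ?_
    rcases hp n i with ⟨h0, h1⟩
    cases x i <;> simp [bmass] <;> linarith
  have hg0 : ∀ n (x : Fin (N n) → Bool), 0 < ∏ i, bmass (p' n i) (x i) := by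
    intro n x
    refine Finset.prod_pos fun i _ => ?_
    rcases hp' n i with ⟨h0, h1⟩
    cases x i <;> simp [bmass] <;> linarith
  -- chi-square bound
  have chi_le : ∀ n,
      (∑ x : Fin (N n) → Bool,
          (∏ i, bmass (p n i) (x i)) ^ 2 / ∏ i, bmass (p' n i) (x i)) ≤ C := by
    intro n
    rw [chi_formula]
    have step1 : ∏ i, (p n i ^ 2 / p' n i + (1 - p n i) ^ 2 / (1 - p' n i))
        ≤ ∏ i, Real.exp (2 * (|C₂| + 1) * rho (p n i) (p' n i)) := by
      apply Finset.prod_le_prod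
      · intro i _
        rcases hp' n i with ⟨h0, h1⟩
        have : (0:ℝ) < 1 - p' n i := by linarith
        positivity
      · intro i _
        rcases hp' n i with ⟨h0, h1⟩
        rcases hp n i with ⟨h2, h3⟩
        have ha : p n i ≤ |C₂| * p' n i :=
          (hC₂ n i).1.trans (mul_le_mul_of_nonneg_right (le_abs_self C₂) h0.le)
        have hb : 1 - p n i ≤ |C₂| * (1 - p' n i) :=
          (hC₂ n i).2.trans (mul_le_mul_of_nonneg_right (le_abs_self C₂) (by linarith))
        have h := coord_bound (p n i) (p' n i) |C₂| h0 h1 h2 h3 ha hb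
        have hexp := Real.add_one_le_exp (2 * (|C₂| + 1) * rho (p n i) (p' n i))
        linarith
    have step2 : ∏ i, Real.exp (2 * (|C₂| + 1) * rho (p n i) (p' n i))
        = Real.exp (∑ i, 2 * (|C₂| + 1) * rho (p n i) (p' n i)) := (Real.exp_sum _ _).symm
    have step3 : Real.exp (∑ i, 2 * (|C₂| + 1) * rho (p n i) (p' n i))
        ≤ Real.exp (2 * (|C₂| + 1) * C₁) := by
      rw [Real.exp_le_exp, ← Finset.mul_sum]
      exact mul_le_mul_of_nonneg_left (hC₁ n) hK0
    calc ∏ i, (p n i ^ 2 / p' n i + (1 - p n i) ^ 2 / (1 - p' n i))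
        ≤ Real.exp (2 * (|C₂| + 1) * C₁) := by rw [← step2] at step3; exact step1.trans step3
      _ ≤ C := le_max_left _ _
  -- Cauchy-Schwarz bound
  have cs_bound : ∀ n (A : Finset (Fin (N n) → Bool)),
      ∑ x ∈ A, ∏ i, bmass (p n i) (x i) ≤
        C * Real.sqrt (∑ x ∈ A, ∏ i, bmass (p' n i) (x i)) := by
    intro n A
    set f : (Fin (N n) → Bool) → ℝ := fun x => ∏ i, bmass (p n i) (x i) with hfdef
    set g : (Fin (N n) → Bool) → ℝ := fun x => ∏ i, bmass (p' n i) (x i) with hgdef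
    have hfx : ∀ x, 0 ≤ f x := hf0 n
    have hgx : ∀ x, 0 < g x := hg0 n
    have cs := Finset.sum_mul_sq_le_sq_mul_sq A
      (fun x => f x / Real.sqrt (g x)) (fun x => Real.sqrt (g x))
    have e1 : ∑ x ∈ A, f x / Real.sqrt (g x) * Real.sqrt (g x) = ∑ x ∈ A, f x :=
      Finset.sum_congr rfl fun x _ => by
        rw [div_mul_cancel₀ _ (Real.sqrt_ne_zero'.mpr (hgx x))]
    have e2 : ∑ x ∈ A, (f x / Real.sqrt (g x)) ^ 2 = ∑ x ∈ A, f x ^ 2 / g x :=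
      Finset.sum_congr rfl fun x _ => by
        rw [div_pow, Real.sq_sqrt (hgx x).le]
    have e3 : ∑ x ∈ A, (Real.sqrt (g x)) ^ 2 = ∑ x ∈ A, g x :=
      Finset.sum_congr rfl fun x _ => Real.sq_sqrt (hgx x).le
    rw [e1, e2, e3] at cs
    have hAchi : ∑ x ∈ A, f x ^ 2 / g x ≤ C := by
      refine le_trans (Finset.sum_le_sum_of_subset_of_nonneg (Finset.subset_univ A) ?_) ?_
      · intro x _ _
        exact div_nonneg (sq_nonneg _) (hgx x).le
      · simp only [hfdef, hgdef]
        exact chi_le n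
    have hgA : 0 ≤ ∑ x ∈ A, g x := Finset.sum_nonneg fun x _ => (hgx x).le
    have step : (∑ x ∈ A, f x) ^ 2 ≤ C * ∑ x ∈ A, g x :=
      cs.trans (mul_le_mul_of_nonneg_right hAchi hgA)
    have h4 : ∑ x ∈ A, f x ≤ Real.sqrt (C * ∑ x ∈ A, g x) := by
      have := Real.sqrt_le_sqrt step
      rwa [Real.sqrt_sq (Finset.sum_nonneg fun x _ => hfx x)] at this
    have hsC : Real.sqrt C ≤ C := by
      nlinarith [Real.sq_sqrt hC0.le, Real.sqrt_nonneg C, sq_nonneg (Real.sqrt C - 1)]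
    calc ∑ x ∈ A, f x ≤ Real.sqrt (C * ∑ x ∈ A, g x) := h4
      _ = Real.sqrt C * Real.sqrt (∑ x ∈ A, g x) := Real.sqrt_mul hC0.le _
      _ ≤ C * Real.sqrt (∑ x ∈ A, g x) :=
          mul_le_mul_of_nonneg_right hsC (Real.sqrt_nonneg _)
  refine ⟨⟨C, hC0, fun n => ⟨chi_le n, cs_bound n⟩⟩, ?_⟩
  intro A hA
  have h0 : ∀ n, 0 ≤ ∑ x ∈ A n, ∏ i, bmass (p n i) (x i) :=
    fun n => Finset.sum_nonneg fun x _ => hf0 n x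
  have hub : ∀ n, ∑ x ∈ A n, ∏ i, bmass (p n i) (x i) ≤
      C * Real.sqrt (∑ x ∈ A n, ∏ i, bmass (p' n i) (x i)) := fun n => cs_bound n (A n)
  have ht : Tendsto (fun n => C * Real.sqrt (∑ x ∈ A n, ∏ i, bmass (p' n i) (x i)))
      atTop (nhds 0) := by
    have := (hA.sqrt).const_mul C
    simpa using this
  exact squeeze_zero h0 hub ht
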